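/- arXiv:2201.10171 — 5 statements merged into one kernel-verified Lean document; each statement's English description precedes it below -/
import Mathlib

section
/- Let l be a prime power, n ≥ 1, and B ⊆ F_l^n \ {0}. Define a chain of subspaces {0} = V_0 ⊆ V_1 ⊆ ··· ⊆ V_n = F_l^n recursively by taking V_i of dimension i containing V_{i-1} and maximizing |B ∩ V_i|. Then for each 1 ≤ i ≤ n-1, one has |B ∩ (V_{i+1} \ V_i)| ≤ l · |B ∩ (V_i \ V_{i-1})|. -/
open Module Set


/-- Let `F` be a finite field of order `l`, `B ⊆ F^n \ {0}`, and let
`{0} = V 0 ⊆ V 1 ⊆ ⋯ ⊆ V n = F^n` be a chain with `dim (V i) = i` chosen greedily: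
at each step `V (i+1)` maximizes `|B ∩ V (i+1)|` among subspaces of dimension `i+1`
containing `V i`. Then `|B ∩ (V (i+1) \ V i)| ≤ l · |B ∩ (V i \ V (i-1))|`
for each `1 ≤ i ≤ n-1`. -/
theorem greedy_chain_shell_bound
    (F : Type*) [Field F] [Fintype F] (l n : ℕ) (hl : Fintype.card F = l) (hn : 1 ≤ n)
    (B : Set (Fin n → F)) (hB : (0 : Fin n → F) ∉ B)
    (V : ℕ → Submodule F (Fin n → F))
    (hV0 : V 0 = ⊥) (hVn : V n = ⊤)
    (hchain : ∀ i < n, V i ≤ V (i + 1))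
    (hdim : ∀ i ≤ n, Module.finrank F (V i) = i)
    (hgreedy : ∀ i < n, ∀ W : Submodule F (Fin n → F),
      V i ≤ W → Module.finrank F W = i + 1 →
      Nat.card ↥(B ∩ (W : Set (Fin n → F)))
        ≤ Nat.card ↥(B ∩ (V (i + 1) : Set (Fin n → F)))) :
    ∀ i, 1 ≤ i → i ≤ n - 1 →
      Nat.card ↥(B ∩ ((V (i + 1) : Set (Fin n → F)) \ (V i : Set (Fin n → F))))
        ≤ l * Nat.card ↥(B ∩ ((V i : Set (Fin n → F)) \ (V (i - 1) : Set (Fin n → F)))) := by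
  classical
  intro i hi1 hi2
  have hl2 : 2 ≤ l := hl ▸ Fintype.one_lt_card
  have hin : i + 1 ≤ n := by omega
  have hi' : i - 1 + 1 = i := by omega
  set A := V (i - 1) with hA
  set M := V i with hM
  set P := V (i + 1) with hP
  have hAM : A ≤ M := by have := hchain (i - 1) (by omega); rwa [hi'] at this
  have hMP : M ≤ P := hchain i (by omega)
  have hAP : A ≤ P := hAM.trans hMP
  have rA : finrank F A = i - 1 := hdim (i - 1) (by omega)
  have rM : finrank F M = i := hdim i (by omega)
  have rP : finrank F P = i + 1 := hdim (i + 1) hin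
  -- cardinality of submodules
  have cardW : ∀ W : Submodule F (Fin n → F),
      (W : Set (Fin n → F)).ncard = l ^ finrank F W := by
    intro W
    have : Fintype W := Fintype.ofFinite W
    rw [← Nat.card_coe_set_eq]
    simp only [SetLike.coe_sort_coe]
    rw [Nat.card_eq_fintype_card, ← hl]
    exact card_eq_pow_finrank
  have greedy' : ∀ W : Submodule F (Fin n → F), A ≤ W → finrank F W = i →
      (B ∩ (W : Set (Fin n → F))).ncard ≤ (B ∩ (M : Set (Fin n → F))).ncard := by
    intro W hW hr
    have h := hgreedy (i - 1) (by omega) W hW (by rw [hi']; exact hr)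
    rw [hi'] at h
    rwa [← Nat.card_coe_set_eq, ← Nat.card_coe_set_eq]
  set Wx : (Fin n → F) → Submodule F (Fin n → F) := fun x => A ⊔ (F ∙ x) with hWx
  set D : Set (Fin n → F) := (P : Set (Fin n → F)) \ (A : Set (Fin n → F)) with hD
  have hxne : ∀ x ∈ D, x ≠ 0 := by
    intro x hx h0; exact hx.2 (by rw [h0]; exact A.zero_mem)
  have frW : ∀ x ∈ D, finrank F (Wx x) = i := by
    intro x hx
    have h0 := hxne x hx
    show finrank F ↥(A ⊔ (F ∙ x)) = i
    have h := Submodule.finrank_sup_add_finrank_inf_eq A (F ∙ x)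
    rw [((Submodule.disjoint_span_singleton' h0).2 hx.2).eq_bot, finrank_bot,
      finrank_span_singleton h0, rA] at h
    omega
  have memW : ∀ x, x ∈ Wx x := fun x =>
    (le_sup_right : (F ∙ x) ≤ Wx x) (Submodule.mem_span_singleton_self x)
  have hAW : ∀ x, A ≤ Wx x := fun x => le_sup_left
  have hWP : ∀ x ∈ D, Wx x ≤ P := by
    intro x hx
    exact sup_le hAP ((Submodule.span_singleton_le_iff_mem x P).2 hx.1)
  have uniq : ∀ x ∈ D, ∀ y ∈ D, y ∈ Wx x → Wx y = Wx x := by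
    intro x hx y hy hyx
    have hle : Wx y ≤ Wx x :=
      sup_le (hAW x) ((Submodule.span_singleton_le_iff_mem y _).2 hyx)
    exact Submodule.eq_of_le_of_finrank_le hle (by rw [frW x hx, frW y hy])
  set T : Finset (Submodule F (Fin n → F)) := D.toFinite.toFinset.image Wx with hT
  have memT : ∀ W, W ∈ T ↔ ∃ x ∈ D, Wx x = W := by
    intro W
    simp only [hT, Finset.mem_image, Set.Finite.mem_toFinset]
  -- shells are pairwise disjoint
  have hdisj : ∀ W ∈ T, ∀ W' ∈ T, W ≠ W' →
      Disjoint ((Set.toFinite ((W : Set (Fin n → F)) \ A)).toFinset)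
        ((Set.toFinite ((W' : Set (Fin n → F)) \ A)).toFinset) := by
    intro W hW W' hW' hne
    obtain ⟨x, hx, rfl⟩ := (memT W).1 hW
    obtain ⟨y, hy, rfl⟩ := (memT W').1 hW'
    rw [Finset.disjoint_left]
    intro b hb hb'
    rw [Set.Finite.mem_toFinset] at hb hb'
    have hbD : b ∈ D := ⟨hWP x hx hb.1, hb.2⟩
    exact hne ((uniq x hx b hbD hb.1).symm.trans (uniq y hy b hbD hb'.1))
  have hdisjB : ∀ W ∈ T, ∀ W' ∈ T, W ≠ W' →
      Disjoint ((Set.toFinite (B ∩ ((W : Set (Fin n → F)) \ A))).toFinset)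
        ((Set.toFinite (B ∩ ((W' : Set (Fin n → F)) \ A))).toFinset) := by
    intro W hW W' hW' hne
    have h := hdisj W hW W' hW' hne
    rw [Finset.disjoint_left] at h ⊢
    intro b hb hb'
    rw [Set.Finite.mem_toFinset] at hb hb'
    exact h (Set.Finite.mem_toFinset _ |>.2 hb.2) (Set.Finite.mem_toFinset _ |>.2 hb'.2)
  -- partition of B ∩ D into shells
  have hpart : (Set.toFinite (B ∩ D)).toFinset =
      T.biUnion (fun W => (Set.toFinite (B ∩ ((W : Set (Fin n → F)) \ A))).toFinset) := by
    ext b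
    simp only [Set.Finite.mem_toFinset, Finset.mem_biUnion, Set.mem_inter_iff]
    constructor
    · rintro ⟨hbB, hbD⟩
      exact ⟨Wx b, (memT _).2 ⟨b, hbD, rfl⟩, hbB, memW b, hbD.2⟩
    · rintro ⟨W, hWT, hbB, hbW, hbA⟩
      obtain ⟨x, hx, rfl⟩ := (memT W).1 hWT
      exact ⟨hbB, hWP x hx hbW, hbA⟩
  have hcard1 : (B ∩ D).ncard = ∑ W ∈ T, (B ∩ ((W : Set (Fin n → F)) \ A)).ncard := by
    rw [Set.ncard_eq_toFinset_card _ (Set.toFinite _), hpart, Finset.card_biUnion hdisjB]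
    exact Finset.sum_congr rfl fun W _ => (Set.ncard_eq_toFinset_card _ (Set.toFinite _)).symm
  -- shells (without B) have size l^i - l^(i-1) and sit disjointly in D
  have hshell : ∀ W ∈ T, ((W : Set (Fin n → F)) \ A).ncard = l ^ i - l ^ (i - 1) := by
    intro W hWT
    obtain ⟨x, hx, rfl⟩ := (memT W).1 hWT
    rw [Set.ncard_diff (hAW x), cardW, cardW, frW x hx, rA]
  have hDcard : D.ncard = l ^ (i + 1) - l ^ (i - 1) := by
    rw [hD, Set.ncard_diff hAP, cardW, cardW, rP, rA]
  have hsub : T.biUnion (fun W => (Set.toFinite ((W : Set (Fin n → F)) \ A)).toFinset)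
      ⊆ D.toFinite.toFinset := by
    intro b hb
    rw [Finset.mem_biUnion] at hb
    obtain ⟨W, hWT, hb⟩ := hb
    rw [Set.Finite.mem_toFinset] at hb ⊢
    obtain ⟨x, hx, rfl⟩ := (memT W).1 hWT
    exact ⟨hWP x hx hb.1, hb.2⟩
  have hsum : T.card * (l ^ i - l ^ (i - 1)) ≤ l ^ (i + 1) - l ^ (i - 1) := by
    have h1 : ∑ W ∈ T, ((W : Set (Fin n → F)) \ A).ncard ≤ D.ncard := by
      rw [Set.ncard_eq_toFinset_card _ (Set.toFinite _)]
      calc ∑ W ∈ T, ((W : Set (Fin n → F)) \ A).ncard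
          = (T.biUnion fun W => (Set.toFinite ((W : Set (Fin n → F)) \ A)).toFinset).card := by
            rw [Finset.card_biUnion hdisj]
            exact Finset.sum_congr rfl fun W _ => Set.ncard_eq_toFinset_card _ (Set.toFinite _)
        _ ≤ _ := Finset.card_le_card hsub
    rw [hDcard] at h1
    calc T.card * (l ^ i - l ^ (i - 1)) = ∑ W ∈ T, (l ^ i - l ^ (i - 1)) := by
          rw [Finset.sum_const, smul_eq_mul]
      _ = ∑ W ∈ T, ((W : Set (Fin n → F)) \ A).ncard :=
          (Finset.sum_congr rfl fun W hW => (hshell W hW).symm)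
      _ ≤ _ := h1
  have hTcard : T.card ≤ l + 1 := by
    have hle1 : l ^ (i - 1) ≤ l ^ i := Nat.pow_le_pow_right (by omega) (by omega)
    have hle2 : l ^ i ≤ l ^ (i + 1) := Nat.pow_le_pow_right (by omega) (by omega)
    have hli : l ^ i = l ^ (i - 1) * l := by rw [← pow_succ, hi']
    have hli1 : l ^ (i + 1) = l ^ (i - 1) * l * l := by rw [pow_succ, hli]
    have hp : 0 < l ^ (i - 1) := by positivity
    have ha1 : l ^ (i - 1) ≤ l ^ (i - 1) * l := Nat.le_mul_of_pos_right _ (by omega)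
    have ha2 : l ^ (i - 1) ≤ l ^ (i - 1) * l * l :=
      le_trans ha1 (Nat.le_mul_of_pos_right _ (by omega))
    have hdpos : 0 < l ^ i - l ^ (i - 1) := by
      have hlt : l ^ (i - 1) < l ^ i := by rw [hli]; nlinarith
      omega
    have heq : (l + 1) * (l ^ i - l ^ (i - 1)) = l ^ (i + 1) - l ^ (i - 1) := by
      rw [hli, hli1]
      zify [ha1, ha2]
      ring
    exact Nat.le_of_mul_le_mul_right (by rw [heq]; exact hsum) hdpos
  -- splitting B ∩ W into A part and shell part
  have hsplit : ∀ W : Submodule F (Fin n → F), A ≤ W →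
      (B ∩ (W : Set (Fin n → F))).ncard =
        (B ∩ (A : Set (Fin n → F))).ncard + (B ∩ ((W : Set (Fin n → F)) \ A)).ncard := by
    intro W hW
    have hset : B ∩ (W : Set (Fin n → F)) =
        (B ∩ (A : Set (Fin n → F))) ∪ (B ∩ ((W : Set (Fin n → F)) \ A)) := by
      ext b
      constructor
      · rintro ⟨hbB, hbW⟩
        by_cases hbA : b ∈ (A : Set (Fin n → F))
        · exact Or.inl ⟨hbB, hbA⟩
        · exact Or.inr ⟨hbB, hbW, hbA⟩
      · rintro (⟨hbB, hbA⟩ | ⟨hbB, hbW, _⟩)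
        · exact ⟨hbB, hW hbA⟩
        · exact ⟨hbB, hbW⟩
    rw [hset, Set.ncard_union_eq]
    · rw [Set.disjoint_left]
      rintro b ⟨_, hbA⟩ ⟨_, _, hbA'⟩
      exact hbA' hbA
  -- splitting B ∩ D into two shells
  have hsplitD : (B ∩ D).ncard =
      (B ∩ ((P : Set (Fin n → F)) \ M)).ncard + (B ∩ ((M : Set (Fin n → F)) \ A)).ncard := by
    have hset : B ∩ D =
        (B ∩ ((P : Set (Fin n → F)) \ M)) ∪ (B ∩ ((M : Set (Fin n → F)) \ A)) := by
      ext b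
      constructor
      · rintro ⟨hbB, hbP, hbA⟩
        by_cases hbM : b ∈ (M : Set (Fin n → F))
        · exact Or.inr ⟨hbB, hbM, hbA⟩
        · exact Or.inl ⟨hbB, hbP, hbM⟩
      · rintro (⟨hbB, hbP, hbM⟩ | ⟨hbB, hbM, hbA⟩)
        · exact ⟨hbB, hbP, fun h => hbM (hAM h)⟩
        · exact ⟨hbB, hMP hbM, hbA⟩
    rw [hset, Set.ncard_union_eq]
    · rw [Set.disjoint_left]
      rintro b ⟨_, _, hbM⟩ ⟨_, hbM', _⟩
      exact hbM hbM'
  -- greedy summation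
  have hgsum : T.card * (B ∩ (A : Set (Fin n → F))).ncard + (B ∩ D).ncard
      ≤ T.card * (B ∩ (M : Set (Fin n → F))).ncard := by
    calc T.card * (B ∩ (A : Set (Fin n → F))).ncard + (B ∩ D).ncard
        = ∑ W ∈ T, ((B ∩ (A : Set (Fin n → F))).ncard
            + (B ∩ ((W : Set (Fin n → F)) \ A)).ncard) := by
          rw [Finset.sum_add_distrib, Finset.sum_const, smul_eq_mul, hcard1]
      _ = ∑ W ∈ T, (B ∩ (W : Set (Fin n → F))).ncard := by
          refine Finset.sum_congr rfl fun W hWT => ?_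
          obtain ⟨x, hx, rfl⟩ := (memT W).1 hWT
          exact (hsplit _ (hAW x)).symm
      _ ≤ ∑ W ∈ T, (B ∩ (M : Set (Fin n → F))).ncard := by
          refine Finset.sum_le_sum fun W hWT => ?_
          obtain ⟨x, hx, rfl⟩ := (memT W).1 hWT
          exact greedy' _ (hAW x) (frW x hx)
      _ = T.card * (B ∩ (M : Set (Fin n → F))).ncard := by
          rw [Finset.sum_const, smul_eq_mul]
  -- conclude
  have key : (B ∩ D).ncard ≤ T.card * (B ∩ ((M : Set (Fin n → F)) \ A)).ncard := by
    have hM' : (B ∩ (M : Set (Fin n → F))).ncard =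
        (B ∩ (A : Set (Fin n → F))).ncard + (B ∩ ((M : Set (Fin n → F)) \ A)).ncard :=
      hsplit M hAM
    rw [hM', Nat.mul_add] at hgsum
    omega
  have final : (B ∩ ((P : Set (Fin n → F)) \ M)).ncard
      ≤ l * (B ∩ ((M : Set (Fin n → F)) \ A)).ncard := by
    rw [hsplitD] at key
    have h2 : T.card * (B ∩ ((M : Set (Fin n → F)) \ A)).ncard
        ≤ (l + 1) * (B ∩ ((M : Set (Fin n → F)) \ A)).ncard :=
      Nat.mul_le_mul_right _ hTcard
    have := le_trans key h2
    rw [Nat.add_mul, one_mul] at this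
    omega
  rw [Nat.card_coe_set_eq, Nat.card_coe_set_eq]
  exact final
end

section
/- Let l ≥ 2, n ≥ 1, and let a_1, a_2, ..., a_n be positive integers with a_1 = 1 and a_{i+1} ≤ l·a_i for all i. Let i* be an index attaining the maximum a_{i*} = max_i a_i, and suppose a_{i*} ≥ S/n where S = Σ_i a_i. Then for any real ξ with 1 ≤ ξ ≤ S/n, the number of indices i with a_i ≥ ξ is at least log_l(S/(nξ)). -/
/-!
Walking up from `a 1 = 1 ≤ ξ`, a term below `ξ` is bounded by `ξ`, while a term `a i ≥ ξ` exceeds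
its predecessor by at most a factor `l`. Hence `a i* ≤ ξ · l ^ T`, where `T` counts the indices with
`a i ≥ ξ`, and `S / (n ξ) ≤ a i* / ξ ≤ l ^ T`.
-/

open Finset

theorem Real.logb_le_of_le_pow {b x : ℝ} {k : ℕ} (hb : 1 < b) (hx : 0 ≤ x) (h : x ≤ b ^ k) :
    Real.logb b x ≤ k := by
  rcases hx.eq_or_lt with rfl | hx
  · simp
  · calc Real.logb b x ≤ Real.logb b (b ^ k) := Real.logb_le_logb_of_le hb hx h
      _ = k := by rw [Real.logb_pow, Real.logb_self_eq_one hb, mul_one]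

theorem le_mul_pow_card_filter_le {a : ℕ → ℝ} {l ξ : ℝ} (hl : 1 ≤ l) (hξ : 0 ≤ ξ)
    (ha1 : a 1 ≤ ξ) {p : ℕ} (hp : 1 ≤ p) (hstep : ∀ i, 1 ≤ i → i < p → a (i + 1) ≤ l * a i) :
    a p ≤ ξ * l ^ #{i ∈ Icc 1 p | ξ ≤ a i} := by
  induction p, hp using Nat.le_induction with
  | base => exact ha1.trans (le_mul_of_one_le_right hξ (one_le_pow₀ hl))
  | succ p hp ih =>
    have ih := ih fun i hi1 hi => hstep i hi1 (by omega)
    rw [← insert_Icc_right_eq_Icc_add_one (by omega), filter_insert]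
    split_ifs with hbig
    · rw [card_insert_of_notMem (by simp), pow_succ, ← mul_assoc, mul_comm _ l]
      calc a (p + 1) ≤ l * a p := hstep p hp (by omega)
        _ ≤ l * (ξ * l ^ #{i ∈ Icc 1 p | ξ ≤ a i}) := by gcongr
    · exact (not_le.mp hbig).le.trans (le_mul_of_one_le_right hξ (one_le_pow₀ hl))

theorem counting_indices_above_threshold_general
    (l n : ℕ) (hl : 2 ≤ l) (a : ℕ → ℕ)
    (ha1 : a 1 = 1)
    (hstep : ∀ i, 1 ≤ i → i ≤ n - 1 → a (i + 1) ≤ l * a i)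
    (istar : ℕ) (histar : istar ∈ Finset.Icc 1 n)
    (S : ℕ)
    (hbig : (S : ℝ) / n ≤ (a istar : ℝ))
    (ξ : ℝ) (hξ1 : 1 ≤ ξ) :
    Real.logb l ((S : ℝ) / (n * ξ))
      ≤ ((Finset.Icc 1 n).filter (fun i => ξ ≤ (a i : ℝ))).card := by
  obtain ⟨hi1, hin⟩ := mem_Icc.mp histar
  have hl1 : (1 : ℝ) < l := by exact_mod_cast hl
  have hξ0 : 0 < ξ := zero_lt_one.trans_le hξ1
  have hpeak : (a istar : ℝ) ≤ ξ * l ^ #{i ∈ Icc 1 istar | ξ ≤ (a i : ℝ)} :=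
    le_mul_pow_card_filter_le (a := fun i => (a i : ℝ)) hl1.le hξ0.le
      (by simpa [ha1] using hξ1) hi1 fun i hi1 hi => by exact_mod_cast hstep i hi1 (by omega)
  have hcard : #{i ∈ Icc 1 istar | ξ ≤ (a i : ℝ)} ≤ #{i ∈ Icc 1 n | ξ ≤ (a i : ℝ)} :=
    card_le_card (filter_subset_filter _ (Icc_subset_Icc_right hin))
  refine Real.logb_le_of_le_pow hl1 (by positivity) ?_
  calc (S : ℝ) / (n * ξ) = S / n / ξ := by rw [div_div]
    _ ≤ a istar / ξ := by gcongr
    _ ≤ l ^ #{i ∈ Icc 1 istar | ξ ≤ (a i : ℝ)} := by rwa [div_le_iff₀' hξ0]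
    _ ≤ l ^ #{i ∈ Icc 1 n | ξ ≤ (a i : ℝ)} := pow_le_pow_right₀ hl1.le hcard

/-- Let `l ≥ 2`, `n ≥ 1`, and `a 1, …, a n` positive integers with
`a 1 = 1` and `a (i+1) ≤ l · a i`. If `i*` attains the maximum of the `a i` and
`a i* ≥ S/n` where `S = Σ_{i=1}^n a i`, then for any real `ξ` with `1 ≤ ξ ≤ S/n`,
the number of indices `i ∈ {1,…,n}` with `a i ≥ ξ` is at least `log_l (S/(n ξ))`. -/
theorem counting_indices_above_threshold
    (l n : ℕ) (hl : 2 ≤ l) (hn : 1 ≤ n) (a : ℕ → ℕ)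
    (hpos : ∀ i ∈ Finset.Icc 1 n, 0 < a i)
    (ha1 : a 1 = 1)
    (hstep : ∀ i, 1 ≤ i → i ≤ n - 1 → a (i + 1) ≤ l * a i)
    (istar : ℕ) (histar : istar ∈ Finset.Icc 1 n)
    (hmax : ∀ i ∈ Finset.Icc 1 n, a i ≤ a istar)
    (S : ℕ) (hS : S = ∑ i ∈ Finset.Icc 1 n, a i)
    (hbig : (S : ℝ) / n ≤ (a istar : ℝ))
    (ξ : ℝ) (hξ1 : 1 ≤ ξ) (hξ2 : ξ ≤ (S : ℝ) / n) :
    Real.logb l ((S : ℝ) / (n * ξ))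
      ≤ ((Finset.Icc 1 n).filter (fun i => ξ ≤ (a i : ℝ))).card :=
  counting_indices_above_threshold_general l n hl a ha1 hstep istar histar S hbig ξ hξ1
end

section
/- Let l be a prime power, n ≥ 1, and let A, B ⊆ F_l^n \ {0} be arbitrary subsets. Let H ∈ F_l^{n×n} be a uniformly random invertible matrix, and set θ := log_l(|A||B|/n) - n - 1. If θ^{-1} ln θ ≥ l^{-n}|A| (and θ > 1), then P(A ∩ HB = ∅) ≤ (1 + ln θ)/θ, where HB := {Hx : x ∈ B}. -/
/-!
Let `X H` count the pairs `(a, b) ∈ A × B` with `H b = a`, so that `A ∩ H B = ∅` iff `X H = 0`,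
and write `q = ℓ ^ n`. The invertible maps act transitively on nonzero vectors and on linearly
independent pairs, so by orbit–stabilizer `E[X] = μ := |A| |B| / (q - 1)`, and in `E[X²]` the
pairs `b, b'` with `b'` a multiple of `b` contribute at most `(ℓ - 1) μ` while the independent
ones contribute at most `μ² (q - 1) / (q - ℓ)`. The second moment method gives
`P(X = 0) ≤ (ℓ - 1) / μ + (ℓ - 1) / (q - ℓ)`.

The definition of `θ` says `|A| |B| = n ℓ ^ (θ + 1) q`; with `|A| |B| ≤ q²` this bounds both terms
by `ℓ ^ (-θ)`, and `2 ℓ ^ (-θ) ≤ 2 ^ (1 - θ) ≤ (1 + log θ) / θ` for `θ ≥ 1`.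
-/

open Finset MulAction Real

theorem Finset.card_filter_eq_zero_mul_sq_le {ι : Type*} (s : Finset ι) (f : ι → ℝ) {μ : ℝ}
    (hμ : ∑ i ∈ s, f i = #s * μ) :
    #{i ∈ s | f i = 0} * μ ^ 2 ≤ ∑ i ∈ s, f i ^ 2 - #s * μ ^ 2 :=
  calc #{i ∈ s | f i = 0} * μ ^ 2 = ∑ i ∈ s with f i = 0, (f i - μ) ^ 2 := by
        rw [sum_congr rfl fun i hi => by rw [(mem_filter.mp hi).2]]
        simp
    _ ≤ ∑ i ∈ s, (f i - μ) ^ 2 :=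
        sum_le_sum_of_subset_of_nonneg (filter_subset _ _) fun _ _ _ => sq_nonneg _
    _ = ∑ i ∈ s, f i ^ 2 - #s * μ ^ 2 := by
        simp only [sub_sq, sum_add_distrib, sum_sub_distrib, ← sum_mul, ← mul_sum, hμ, sum_const,
          nsmul_eq_mul]
        ring

theorem Finset.sum_card_filter_sq {α β : Type*} [Fintype α] (s : Finset β) (r : α → β → Prop)
    [∀ a b, Decidable (r a b)] :
    ∑ a, #{b ∈ s | r a b} ^ 2 = ∑ b ∈ s, ∑ b' ∈ s, #{a | r a b ∧ r a b'} := by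
  have hsq : ∀ a, #{b ∈ s | r a b} ^ 2 = #{x ∈ s ×ˢ s | r a x.1 ∧ r a x.2} := fun a => by
    rw [sq, ← card_product, filter_product]
  simp_rw [hsq]
  rw [← sum_product' (f := fun b b' => #{a | r a b ∧ r a b'})]
  exact sum_card_bipartiteAbove_eq_sum_card_bipartiteBelow fun a (x : β × β) => r a x.1 ∧ r a x.2

theorem MulAction.card_filter_smul_eq_mul_ncard_orbit {G α : Type*} [Group G] [MulAction G α]
    [Fintype G] [DecidableEq α] {x y : α} (hy : y ∈ orbit G x) :
    #{g : G | g • x = y} * (orbit G x).ncard = Fintype.card G := by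
  obtain ⟨h, rfl⟩ := hy
  have hfiber : #{g : G | g • x = h • x} = Nat.card (stabilizer G x) := by
    rw [← Nat.card_eq_finsetCard]
    refine Nat.card_congr (Equiv.subtypeEquiv (Equiv.mulLeft h⁻¹) fun g => ?_)
    simp [mul_smul, inv_smul_eq_iff]
  rw [hfiber, ← index_stabilizer, Subgroup.card_mul_index, Nat.card_eq_fintype_card]

theorem MulAction.card_filter_smul_eq_mul_ncard_orbit_le {G α : Type*} [Group G] [MulAction G α]
    [Fintype G] [DecidableEq α] (x y : α) :
    #{g : G | g • x = y} * (orbit G x).ncard ≤ Fintype.card G := by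
  by_cases hy : y ∈ orbit G x
  · exact (card_filter_smul_eq_mul_ncard_orbit hy).le
  · have : #{g : G | g • x = y} = 0 := by
      simpa [card_eq_zero, filter_eq_empty_iff] using fun g hg => hy ⟨g, hg⟩
    simp [this]

section LinearEquivAction

variable {K V : Type*} [Field K] [AddCommGroup V] [Module K V]

theorem orbit_linearEquiv_eq_setOf_linearIndependent {ι : Type*} [Finite ι] {v : ι → V}
    (hv : LinearIndependent K v) : orbit (V ≃ₗ[K] V) v = {w | LinearIndependent K w} := by
  ext w
  constructor
  · rintro ⟨g, rfl⟩
    exact hv.map' g.toLinearMap g.ker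
  · intro hw
    have := FiniteDimensional.span_of_finite K (Set.finite_range v)
    obtain ⟨g, hg⟩ := Submodule.exists_linearEquiv_restrict_eq
      ((Module.Basis.span hv).equiv (Module.Basis.span hw) (Equiv.refl ι))
    refine ⟨g, funext fun i => ?_⟩
    change g (v i) = w i
    have := hg (Module.Basis.span hv i)
    rwa [Module.Basis.equiv_apply, Equiv.refl_apply, Module.Basis.span_apply,
      Module.Basis.span_apply, eq_comm] at this

variable [Fintype K]

local notation "ℓ" => Fintype.card K

open Classical in
theorem card_filter_mem_span_singleton_le {B : Finset V} (hB : 0 ∉ B) (b : V) :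
    #{b' ∈ B | b' ∈ K ∙ b} ≤ ℓ - 1 := by
  rw [← card_univ, ← card_erase_of_mem (mem_univ 0)]
  refine card_le_card_of_surjOn (fun c : K => c • b) fun b' hb' => ?_
  obtain ⟨hb'B, c, rfl⟩ := (mem_filter.mp hb').imp_right Submodule.mem_span_singleton.mp
  refine ⟨c, mem_erase.mpr ⟨?_, mem_univ c⟩, rfl⟩
  rintro rfl
  exact hB (by simpa using hb'B)

variable [Fintype V]

local notation "q" => Fintype.card V

theorem ncard_orbit_linearEquiv_of_linearIndependent {k : ℕ} {v : Fin k → V}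
    (hv : LinearIndependent K v) :
    (orbit (V ≃ₗ[K] V) v).ncard = ∏ i : Fin k, (q - ℓ ^ (i : ℕ)) := by
  have hk : k ≤ Module.finrank K V := by simpa using hv.fintype_card_le_finrank
  rw [orbit_linearEquiv_eq_setOf_linearIndependent hv, ← Nat.card_coe_set_eq, Set.coe_ofPred,
    card_linearIndependent (K := K) (V := V) hk, Module.card_eq_pow_finrank (K := K) (V := V)]

variable [DecidableEq V] [Fintype (V ≃ₗ[K] V)]

theorem card_filter_apply_eq_eq_div {a b : V} (hb : b ≠ 0) (ha : a ≠ 0) :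
    (#{g : V ≃ₗ[K] V | g b = a} : ℝ) = Fintype.card (V ≃ₗ[K] V) / (q - 1) := by
  have hv : LinearIndependent K ![b] := linearIndependent_unique_iff.mpr hb
  have hw : ![a] ∈ orbit (V ≃ₗ[K] V) ![b] := by
    rw [orbit_linearEquiv_eq_setOf_linearIndependent hv]
    exact linearIndependent_unique_iff.mpr ha
  have hcard := card_filter_smul_eq_mul_ncard_orbit hw
  rw [ncard_orbit_linearEquiv_of_linearIndependent hv, Fin.prod_univ_one, Fin.val_zero,
    pow_zero] at hcard
  have : Nontrivial V := nontrivial_of_ne b 0 hb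
  have hq : (1 : ℝ) < q := by exact_mod_cast Fintype.one_lt_card
  rw [eq_div_iff (by linarith), ← hcard, Nat.cast_mul, Nat.cast_pred Fintype.card_pos]
  congr 3
  simp [funext_iff, LinearEquiv.smul_def]

theorem card_filter_apply_eq_and_apply_eq_le_div {b b' : V}
    (hb : LinearIndependent K ![b, b']) (a a' : V) (hq : ℓ < q) :
    (#{g : V ≃ₗ[K] V | g b = a ∧ g b' = a'} : ℝ) ≤
      Fintype.card (V ≃ₗ[K] V) / ((q - 1) * (q - ℓ)) := by
  have hcard := card_filter_smul_eq_mul_ncard_orbit_le (G := V ≃ₗ[K] V) ![b, b'] ![a, a']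
  rw [ncard_orbit_linearEquiv_of_linearIndependent hb, Fin.prod_univ_two, Fin.val_zero,
    Fin.val_one, pow_zero, pow_one] at hcard
  have h1q : 1 < q := Fintype.one_lt_card.trans hq
  have hcast : (((q - 1) * (q - ℓ) : ℕ) : ℝ) = (q - 1) * (q - ℓ) := by
    push_cast [Nat.cast_sub h1q.le, Nat.cast_sub hq.le]; rfl
  have hpos : (0 : ℝ) < (q - 1) * (q - ℓ) := by
    rw [← hcast]; exact_mod_cast Nat.mul_pos (by omega) (by omega)
  rw [le_div_iff₀ hpos, ← hcast, ← Nat.cast_mul, Nat.cast_le]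
  convert hcard using 3
  simp [funext_iff, Fin.forall_fin_two, LinearEquiv.smul_def]

theorem sum_card_filter_apply_eq_and_apply_eq_le (A : Finset V) {B : Finset V} (hB : 0 ∉ B)
    {b : V} (hb : b ≠ 0) (a : V) (hq : ℓ < q) :
    ∑ b' ∈ B, ∑ a' ∈ A, (#{g : V ≃ₗ[K] V | g b = a ∧ g b' = a'} : ℝ) ≤
      (ℓ - 1) * #{g : V ≃ₗ[K] V | g b = a} +
        #A * #B * (Fintype.card (V ≃ₗ[K] V) / ((q - 1) * (q - ℓ))) := by
  classical
  set M : ℝ := Fintype.card (V ≃ₗ[K] V) / ((q - 1) * (q - ℓ))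
  have hdep : ∀ b', ∑ a' ∈ A, #{g : V ≃ₗ[K] V | g b = a ∧ g b' = a'} ≤
      #{g : V ≃ₗ[K] V | g b = a} := fun b' =>
    calc ∑ a' ∈ A, #{g : V ≃ₗ[K] V | g b = a ∧ g b' = a'}
        = #{g ∈ {g : V ≃ₗ[K] V | g b = a} | g b' ∈ A} := by
          simp_rw [← sum_card_fiberwise_eq_card_filter, filter_filter]
      _ ≤ _ := card_filter_le _ _
  have hM : 0 ≤ M := by
    have : (ℓ : ℝ) < q := by exact_mod_cast hq
    have : (1 : ℝ) ≤ ℓ := by exact_mod_cast Fintype.card_pos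
    exact div_nonneg (Nat.cast_nonneg _) (mul_nonneg (by linarith) (by linarith))
  have hℓ : ((ℓ - 1 : ℕ) : ℝ) = ℓ - 1 := Nat.cast_pred Fintype.card_pos
  rw [← sum_filter_add_sum_filter_not B (· ∈ K ∙ b)]
  gcongr ?_ + ?_
  · calc ∑ b' ∈ B with b' ∈ K ∙ b, ∑ a' ∈ A, (#{g : V ≃ₗ[K] V | g b = a ∧ g b' = a'} : ℝ)
        ≤ ∑ b' ∈ B with b' ∈ K ∙ b, (#{g : V ≃ₗ[K] V | g b = a} : ℝ) :=
          sum_le_sum fun b' _ => by exact_mod_cast hdep b'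
      _ ≤ (ℓ - 1) * #{g : V ≃ₗ[K] V | g b = a} := by
          rw [sum_const, nsmul_eq_mul, ← hℓ]
          gcongr
          exact card_filter_mem_span_singleton_le hB b
  · calc ∑ b' ∈ B with b' ∉ K ∙ b, ∑ a' ∈ A, (#{g : V ≃ₗ[K] V | g b = a ∧ g b' = a'} : ℝ)
        ≤ ∑ b' ∈ B with b' ∉ K ∙ b, ∑ a' ∈ A, M :=
          sum_le_sum fun b' hb' => sum_le_sum fun a' _ =>
            card_filter_apply_eq_and_apply_eq_le_div ((LinearIndependent.pair_iff' hb).mpr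
              fun c hc => (mem_filter.mp hb').2 (Submodule.mem_span_singleton.mpr ⟨c, hc⟩))
              a a' hq
      _ = #A * (#{b' ∈ B | b' ∉ K ∙ b} * M) := by simp only [sum_const, nsmul_eq_mul]; ring
      _ ≤ #A * (#B * M) := by gcongr; exact filter_subset _ B
      _ = #A * #B * M := by ring

variable {A B : Finset V}

theorem sum_card_filter_apply_eq (hA : 0 ∉ A) (hB : 0 ∉ B) :
    ∑ g : V ≃ₗ[K] V, (#{p ∈ A ×ˢ B | g p.2 = p.1} : ℝ) =
      Fintype.card (V ≃ₗ[K] V) * (#A * #B / (q - 1)) := by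
  have hfiber : ∀ p ∈ A ×ˢ B, (#{g : V ≃ₗ[K] V | g p.2 = p.1} : ℝ) =
      Fintype.card (V ≃ₗ[K] V) / (q - 1) := fun p hp => by
    obtain ⟨ha, hb⟩ := mem_product.mp hp
    exact card_filter_apply_eq_eq_div (ne_of_mem_of_not_mem hb hB) (ne_of_mem_of_not_mem ha hA)
  have hswap : ∑ g : V ≃ₗ[K] V, #{p ∈ A ×ˢ B | g p.2 = p.1} =
      ∑ p ∈ A ×ˢ B, #{g : V ≃ₗ[K] V | g p.2 = p.1} :=
    sum_card_bipartiteAbove_eq_sum_card_bipartiteBelow _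
  rw [← Nat.cast_sum, hswap, Nat.cast_sum, sum_congr rfl hfiber, sum_const, card_product,
    nsmul_eq_mul]
  push_cast
  ring

theorem sum_card_filter_apply_eq_sq_le (hA : 0 ∉ A) (hB : 0 ∉ B) (hq : ℓ < q) :
    ∑ g : V ≃ₗ[K] V, (#{p ∈ A ×ˢ B | g p.2 = p.1} : ℝ) ^ 2 ≤
      Fintype.card (V ≃ₗ[K] V) * (#A * #B / (q - 1)) * (ℓ - 1 + #A * #B / (q - ℓ)) := by
  have hq1 : (1 : ℝ) < q := by exact_mod_cast Fintype.one_lt_card.trans hq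
  have hinner : ∀ p ∈ A ×ˢ B, ∑ p' ∈ A ×ˢ B,
      (#{g : V ≃ₗ[K] V | g p.2 = p.1 ∧ g p'.2 = p'.1} : ℝ) ≤
        Fintype.card (V ≃ₗ[K] V) / (q - 1) * (ℓ - 1 + #A * #B / (q - ℓ)) := fun p hp => by
    obtain ⟨ha, hb⟩ := mem_product.mp hp
    rw [sum_product, sum_comm]
    refine (sum_card_filter_apply_eq_and_apply_eq_le A hB (ne_of_mem_of_not_mem hb hB) p.1
      hq).trans (le_of_eq ?_)
    rw [card_filter_apply_eq_eq_div (ne_of_mem_of_not_mem hb hB) (ne_of_mem_of_not_mem ha hA)]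
    field_simp
  have hsum := sum_le_sum hinner
  rw [sum_const, card_product, nsmul_eq_mul] at hsum
  calc ∑ g : V ≃ₗ[K] V, (#{p ∈ A ×ˢ B | g p.2 = p.1} : ℝ) ^ 2
      = ∑ p ∈ A ×ˢ B, ∑ p' ∈ A ×ˢ B,
          (#{g : V ≃ₗ[K] V | g p.2 = p.1 ∧ g p'.2 = p'.1} : ℝ) := by
        exact_mod_cast sum_card_filter_sq (A ×ˢ B) fun (g : V ≃ₗ[K] V) p => g p.2 = p.1
    _ ≤ _ := hsum
    _ = _ := by push_cast; ring

theorem card_filter_forall_apply_notMem_le (hA : 0 ∉ A) (hB : 0 ∉ B) (hA₀ : A.Nonempty)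
    (hB₀ : B.Nonempty) (hq : ℓ < q) :
    (#{g : V ≃ₗ[K] V | ∀ b ∈ B, g b ∉ A} : ℝ) ≤
      Fintype.card (V ≃ₗ[K] V) * ((ℓ - 1) * (q - 1) / (#A * #B) + (ℓ - 1) / (q - ℓ)) := by
  set N : ℝ := (Fintype.card (V ≃ₗ[K] V) : ℝ)
  set μ : ℝ := #A * #B / (q - 1)
  set X : (V ≃ₗ[K] V) → ℝ := fun g => #{p ∈ A ×ˢ B | g p.2 = p.1}
  have hq1 : (1 : ℝ) < q := by exact_mod_cast Fintype.one_lt_card.trans hq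
  have hqℓ : (ℓ : ℝ) < q := by exact_mod_cast hq
  have hAB : (0 : ℝ) < #A * #B := by have := hA₀.card_pos; have := hB₀.card_pos; positivity
  have hμ : 0 < μ := div_pos hAB (by linarith)
  have hzero : #{g : V ≃ₗ[K] V | ∀ b ∈ B, g b ∉ A} = #{g ∈ univ | X g = 0} := by
    congr 1
    refine filter_congr fun g _ => ?_
    simp only [X, Nat.cast_eq_zero, card_eq_zero, filter_eq_empty_iff, mem_product, and_imp,
      Prod.forall]
    exact ⟨fun h a b ha hb hab => h b hb (hab ▸ ha), fun h b hb hba => h _ b hba hb rfl⟩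
  have hmoment := card_filter_eq_zero_mul_sq_le univ X (μ := μ)
    (by rw [card_univ]; exact sum_card_filter_apply_eq hA hB)
  rw [card_univ] at hmoment
  rw [hzero]
  refine le_of_mul_le_mul_right ?_ (pow_pos hμ 2)
  have hrhs : N * ((ℓ - 1) * (q - 1) / (#A * #B) + (ℓ - 1) / (q - ℓ)) * μ ^ 2 =
      N * μ * (ℓ - 1 + #A * #B / (q - ℓ)) - N * μ ^ 2 := by
    have : (q : ℝ) - 1 ≠ 0 := by linarith
    have : (q : ℝ) - ℓ ≠ 0 := by linarith
    simp only [μ]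
    field_simp
    ring
  linarith [sum_card_filter_apply_eq_sq_le hA hB hq]

end LinearEquivAction

theorem two_div_two_rpow_le_one_add_log_div {θ : ℝ} (hθ : 1 ≤ θ) :
    2 / 2 ^ θ ≤ (1 + log θ) / θ := by
  have hθ0 : 0 < θ := by linarith
  -- The product of the two lower bounds `hP` and `hlog` dominates `θ²` because `log 2 > 1 / 2`.
  have hP : 1 + (θ - 1) * log 2 ≤ 2 ^ (θ - 1) := by
    rw [rpow_def_of_pos two_pos]
    linarith [add_one_le_exp (log 2 * (θ - 1))]
  have hlog : 2 * θ - 1 ≤ θ * (1 + log θ) := by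
    have := log_le_sub_one_of_pos (inv_pos.mpr hθ0)
    rw [log_inv] at this
    have := mul_le_mul_of_nonneg_left (by linarith : 1 - θ⁻¹ ≤ log θ) hθ0.le
    rw [mul_sub, mul_inv_cancel₀ hθ0.ne'] at this
    linarith
  have hsq : θ ^ 2 ≤ (2 * θ - 1) * (1 + (θ - 1) * log 2) := by
    nlinarith [log_two_gt_d9, mul_nonneg (sub_nonneg.mpr hθ) (sub_nonneg.mpr hθ)]
  have hkey : θ * θ ≤ θ * ((1 + log θ) * 2 ^ (θ - 1)) := by
    have hP0 : 0 ≤ 1 + (θ - 1) * log 2 := by nlinarith [log_two_gt_d9]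
    nlinarith [mul_le_mul hlog hP hP0 (by nlinarith)]
  rw [show (2 : ℝ) ^ θ = 2 * 2 ^ (θ - 1) by rw [rpow_sub two_pos, rpow_one]; field_simp,
    div_le_div_iff₀ (by positivity) hθ0]
  nlinarith [le_of_mul_le_mul_left hkey hθ0]

theorem eq_mul_rpow_of_eq_logb_sub {l c n θ : ℝ} (hl : 1 < l) (hc : 0 ≤ c) (hn : 0 ≤ n)
    (hθ : θ = logb l (c / n) - n - 1) (hθ1 : 1 < θ) : 0 < n ∧ c = n * l * l ^ θ * l ^ n := by
  -- Junk values: `c / 0 = 0` and `logb l 0 = 0`, so `c / n = 0` would force `θ = -n - 1`.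
  have hcn : 0 < c / n := by
    refine (div_nonneg hc hn).lt_of_ne fun h => ?_
    rw [← h, logb_zero] at hθ
    linarith
  have hn0 : 0 < n := by
    rcases hn.lt_or_eq with hn | rfl
    · exact hn
    · simp at hcn
  refine ⟨hn0, ?_⟩
  have := rpow_logb (by linarith) hl.ne' hcn
  rw [show logb l (c / n) = θ + 1 + n by linarith, rpow_add (by linarith),
    rpow_add (by linarith), rpow_one, eq_div_iff hn0.ne'] at this
  linarith

theorem sub_one_mul_div_add_sub_one_div_le_of_eq_mul_rpow {l q c n θ : ℝ} (hl : 2 ≤ l)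
    (hn : 1 ≤ n) (hθ : 1 < θ) (hq : 0 < q) (hc : c = n * l * l ^ θ * q) (hcq : c ≤ q ^ 2) :
    0 < c ∧ l < q ∧ (l - 1) * (q - 1) / c + (l - 1) / (q - l) ≤ (1 + log θ) / θ := by
  set t := l ^ θ
  have hlt : l ≤ t := by simpa using rpow_le_rpow_of_exponent_le (by linarith) hθ.le
  have hlt0 : 0 < l * t := by nlinarith
  have hnlt : l * t ≤ n * l * t := by nlinarith
  have hnltq : n * l * t ≤ q := le_of_mul_le_mul_right (by nlinarith) hq
  have hlq : l < q := by nlinarith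
  refine ⟨by rw [hc]; positivity, hlq, ?_⟩
  have h1 : (l - 1) * (q - 1) / c ≤ 1 / t := by
    rw [hc, div_le_div_iff₀ (by positivity) (by linarith)]
    nlinarith
  have h2 : (l - 1) / (q - l) ≤ 1 / t := by
    rw [div_le_div_iff₀ (by linarith) (by linarith)]
    nlinarith
  calc (l - 1) * (q - 1) / c + (l - 1) / (q - l) ≤ 2 / t := by
        linarith [show 2 / t = 1 / t + 1 / t by ring]
    _ ≤ 2 / 2 ^ θ := by gcongr; exact rpow_le_rpow zero_le_two hl (by linarith)
    _ ≤ (1 + log θ) / θ := two_div_two_rpow_le_one_add_log_div hθ.le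

theorem intersection_lemma_general
    (F : Type*) [Field F] [Fintype F] (l n : ℕ) (hl : Fintype.card F = l)
    (A B : Set (Fin n → F)) (hA : (0 : Fin n → F) ∉ A) (hB : (0 : Fin n → F) ∉ B)
    (θ : ℝ)
    (hθ : θ = Real.logb l ((Nat.card A : ℝ) * (Nat.card B : ℝ) / n) - n - 1)
    (hθ1 : 1 < θ) :
    (Nat.card {H : (Fin n → F) ≃ₗ[F] (Fin n → F) //
        A ∩ (fun v => H v) '' B = ∅} : ℝ)
      ≤ (1 + Real.log θ) / θ *
        (Nat.card ((Fin n → F) ≃ₗ[F] (Fin n → F)) : ℝ) := by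
  classical
  have : Finite ((Fin n → F) ≃ₗ[F] (Fin n → F)) := Finite.of_injective _ DFunLike.coe_injective
  have := Fintype.ofFinite ((Fin n → F) ≃ₗ[F] (Fin n → F))
  subst hl
  have hℓ : (2 : ℝ) ≤ Fintype.card F := by
    exact_mod_cast (Fintype.one_lt_card : 1 < Fintype.card F)
  have hq : (Fintype.card (Fin n → F) : ℝ) = (Fintype.card F : ℝ) ^ (n : ℝ) := by
    simp [rpow_natCast]
  obtain ⟨hn, hc⟩ := eq_mul_rpow_of_eq_logb_sub (by linarith) (by positivity) n.cast_nonneg hθ hθ1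
  rw [Nat.card_eq_card_toFinset A, Nat.card_eq_card_toFinset B, ← hq] at hc
  obtain ⟨hc0, hlq, hbound⟩ := sub_one_mul_div_add_sub_one_div_le_of_eq_mul_rpow hℓ
    (Nat.one_le_cast.mpr (Nat.cast_pos.mp hn)) hθ1 (by exact_mod_cast Fintype.card_pos) hc
    (by rw [sq]; gcongr <;> exact_mod_cast card_le_univ _)
  have hAB : 0 < #A.toFinset * #B.toFinset := by exact_mod_cast hc0
  have hcount : Nat.card {H : (Fin n → F) ≃ₗ[F] (Fin n → F) // A ∩ (fun v => H v) '' B = ∅} =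
      #{H : (Fin n → F) ≃ₗ[F] (Fin n → F) | ∀ b ∈ B.toFinset, H b ∉ A.toFinset} := by
    rw [Nat.card_eq_fintype_card, Fintype.card_subtype]
    congr 1
    refine filter_congr fun H _ => ?_
    simp only [Set.eq_empty_iff_forall_notMem, Set.mem_inter_iff, Set.mem_image,
      Set.mem_toFinset]
    exact ⟨fun h b hb hbA => h _ ⟨hbA, b, hb, rfl⟩,
      fun h a ⟨ha, b, hb, hba⟩ => h b hb (hba ▸ ha)⟩
  rw [hcount, Nat.card_eq_fintype_card, mul_comm ((1 + log θ) / θ)]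
  exact (card_filter_forall_apply_notMem_le (by simpa using hA) (by simpa using hB)
    (card_pos.mp (pos_of_mul_pos_left hAB (Nat.zero_le _)))
    (card_pos.mp (pos_of_mul_pos_right hAB (Nat.zero_le _))) (by exact_mod_cast hlq)).trans
    (mul_le_mul_of_nonneg_left hbound (Nat.cast_nonneg _))

/-- key intersection lemma: Let `F` be a finite field of order `l`,
`A, B ⊆ F^n \ {0}`, and `H` a uniformly random invertible linear map on `F^n`
(uniformly random full-rank matrix). Set `θ := log_l (|A||B|/n) - n - 1`. If `θ > 1` and
`θ⁻¹ ln θ ≥ l^{-n} |A|`, then `P(A ∩ H B = ∅) ≤ (1 + ln θ)/θ`. -/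
theorem intersection_lemma
    (F : Type*) [Field F] [Fintype F] (l n : ℕ) (hl : Fintype.card F = l) (hn : 1 ≤ n)
    (A B : Set (Fin n → F)) (hA : (0 : Fin n → F) ∉ A) (hB : (0 : Fin n → F) ∉ B)
    (θ : ℝ)
    (hθ : θ = Real.logb l ((Nat.card A : ℝ) * (Nat.card B : ℝ) / n) - n - 1)
    (hθ1 : 1 < θ)
    (hcond : θ⁻¹ * Real.log θ ≥ ((l : ℝ) ^ n)⁻¹ * (Nat.card A : ℝ)) :
    (Nat.card {H : (Fin n → F) ≃ₗ[F] (Fin n → F) //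
        A ∩ (fun v => H v) '' B = ∅} : ℝ)
      ≤ (1 + Real.log θ) / θ *
        (Nat.card ((Fin n → F) ≃ₗ[F] (Fin n → F)) : ℝ) :=
  intersection_lemma_general F l n hl A B hA hB θ hθ hθ1
end

section
/- Under the hypotheses of the weighted parity-check capacity corollary — Y finite, (S,X,Y) with X binary, p_d(y) = P(X=1|Y=y), Q ∼ P_Q with E[H_b(Q)] = (1 - H(X|S))/(1-R), V|Q ∼ Bern(Q), and rate R < H(X|S) - H(X|Y) — for any conditional distributions P_{X̃|Y} (binary given Y) and P_{Ṽ|Q} (binary given Q) satisfying H(X̃|Y) + (1-R) H(Ṽ|Q) ≥ 1 - R, the strict inequality E[H_b(X̃, p_d(Y))] + (1-R) E[H_b(Ṽ, Q)] > E[H_b(X, p_d(Y))] + (1-R) E[H_b(V, Q)] holds. -/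
/-!
By Gibbs' inequality every cross entropy dominates the corresponding entropy, so the right-hand
side is at least `H(X̃|Y) + (1-R) H(Ṽ|Q) ≥ 1 - R`. The rate condition makes `1 - R` strictly larger
than `H(X|Y) + (1 - H(X|S))`, and the choice of `Q` makes this exactly the left-hand side.
-/

/-- Binary cross entropy `H_b(φ,ψ) = -φ log₂ ψ - (1-φ) log₂ (1-ψ)`. -/
noncomputable def Hb2 (φ ψ : ℝ) : ℝ :=
  -φ * Real.logb 2 ψ - (1 - φ) * Real.logb 2 (1 - ψ)

/-- Binary entropy `H_b(φ) = H_b(φ,φ)`. -/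
noncomputable def Hb (φ : ℝ) : ℝ := Hb2 φ φ

open Real Set

lemma mul_log_sub_mul_log_le {a b : ℝ} (ha : 0 ≤ a) (hb : 0 < b) :
    a * log b - a * log a ≤ b - a := by
  rcases ha.eq_or_lt with rfl | ha
  · simpa using hb.le
  calc a * log b - a * log a = a * log (b / a) := by rw [log_div hb.ne' ha.ne']; ring
    _ ≤ a * (b / a - 1) := mul_le_mul_of_nonneg_left (log_le_sub_one_of_pos (by positivity)) ha.le
    _ = b - a := by field_simp

lemma Hb_le_Hb2 {φ ψ : ℝ} (hφ : φ ∈ Icc (0 : ℝ) 1) (hψ : ψ ∈ Ioo (0 : ℝ) 1) :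
    Hb φ ≤ Hb2 φ ψ := by
  have h₁ := mul_log_sub_mul_log_le hφ.1 hψ.1
  have h₂ := mul_log_sub_mul_log_le (sub_nonneg.2 hφ.2) (sub_pos.2 hψ.2)
  have hnum : φ * log ψ + (1 - φ) * log (1 - ψ) ≤ φ * log φ + (1 - φ) * log (1 - φ) := by
    linarith
  have hHb2 : ∀ x y : ℝ, Hb2 x y = -((x * log y + (1 - x) * log (1 - y)) / log 2) := by
    intro x y
    simp only [Hb2, logb]
    ring
  rw [Hb, hHb2, hHb2]
  exact neg_le_neg (div_le_div_of_nonneg_right hnum (log_pos one_lt_two).le)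

lemma sum_mul_Hb_le_sum_mul_Hb2 {ι : Type*} [Fintype ι] {w φ ψ : ι → ℝ} (hw : ∀ i, 0 ≤ w i)
    (hφ : ∀ i, φ i ∈ Icc (0 : ℝ) 1) (hψ : ∀ i, ψ i ∈ Ioo (0 : ℝ) 1) :
    ∑ i, w i * Hb (φ i) ≤ ∑ i, w i * Hb2 (φ i) (ψ i) :=
  Finset.sum_le_sum fun i _ => mul_le_mul_of_nonneg_left (Hb_le_Hb2 (hφ i) (hψ i)) (hw i)

theorem decoder_strict_inequality_general
    (Y : Type*) [Fintype Y] (R : ℝ) (hR1 : R < 1)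
    -- marginal of Y and decoder conditional probability pd y = P(X=1|Y=y)
    (pY : Y → ℝ) (hpY : ∀ y, 0 ≤ pY y)
    (pd : Y → ℝ) (hpd : ∀ y, pd y ∈ Set.Ioo (0 : ℝ) 1)
    -- conditional entropies H(X|Y) and H(X|S)
    (HXY HXS : ℝ) (hHXY : HXY = ∑ y, pY y * Hb (pd y))
    -- parity bias distribution Q with values q ω ∈ (0,1) and weights w
    (Ω : Type*) [Fintype Ω] (w : Ω → ℝ) (hw : ∀ ω, 0 ≤ w ω)
    (q : Ω → ℝ) (hq : ∀ ω, q ω ∈ Set.Ioo (0 : ℝ) 1)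
    -- E[H_b(Q)] = (1 - H(X|S))/(1 - R)
    (hEQ : ∑ ω, w ω * Hb (q ω) = (1 - HXS) / (1 - R))
    -- rate condition R < H(X|S) - H(X|Y) = I(X;Y) - I(X;S)
    (hrate : R < HXS - HXY)
    -- alternative conditional distributions P(X̃=1|Y=y) = pt y, P(Ṽ=1|Q=q ω) = vt ω
    (pt : Y → ℝ) (hpt : ∀ y, pt y ∈ Set.Icc (0 : ℝ) 1)
    (vt : Ω → ℝ) (hvt : ∀ ω, vt ω ∈ Set.Icc (0 : ℝ) 1)
    -- the constraint H(X̃|Y) + (1-R) H(Ṽ|Q) ≥ 1 - R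
    (hcons : 1 - R ≤ ∑ y, pY y * Hb (pt y) + (1 - R) * ∑ ω, w ω * Hb (vt ω)) :
    ∑ y, pY y * Hb2 (pd y) (pd y) + (1 - R) * ∑ ω, w ω * Hb2 (q ω) (q ω)
      < ∑ y, pY y * Hb2 (pt y) (pd y) + (1 - R) * ∑ ω, w ω * Hb2 (vt ω) (q ω) := by
  have hR : 0 < 1 - R := sub_pos.2 hR1
  have hX : ∑ y, pY y * Hb2 (pd y) (pd y) = HXY := hHXY.symm
  have hV : (1 - R) * ∑ ω, w ω * Hb2 (q ω) (q ω) = 1 - HXS := by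
    change (1 - R) * ∑ ω, w ω * Hb (q ω) = 1 - HXS
    rw [hEQ]
    field_simp
  have hXt := sum_mul_Hb_le_sum_mul_Hb2 hpY hpt hpd
  have hVt := mul_le_mul_of_nonneg_left (sum_mul_Hb_le_sum_mul_Hb2 hw hvt hq) hR.le
  linarith

/-- Under the hypotheses of the weighted parity-check capacity corollary —
`Y` finite, `X` binary with conditional entropies `H(X|S)`, `H(X|Y)`,
decoder bias `p_d(y) = P(X=1|Y=y)`, parity bias `Q` with
`E[H_b(Q)] = (1 - H(X|S))/(1-R)` and `V|Q ∼ Bern(Q)` (so `H(V|Q) = E[H_b(V,Q)] = E[H_b(Q)]`),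
and rate `R < H(X|S) - H(X|Y)` — any conditional distributions `P(X̃=1|Y=y) = pt y` and
`P(Ṽ=1|Q=q ω) = vt ω` satisfying `H(X̃|Y) + (1-R) H(Ṽ|Q) ≥ 1 - R` obey the strict
inequality
`E[H_b(X̃,p_d(Y))] + (1-R) E[H_b(Ṽ,Q)] > E[H_b(X,p_d(Y))] + (1-R) E[H_b(V,Q)]`. -/
theorem decoder_strict_inequality
    (Y : Type*) [Fintype Y] (R : ℝ) (hR0 : 0 ≤ R) (hR1 : R < 1)
    -- marginal of Y and decoder conditional probability pd y = P(X=1|Y=y)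
    (pY : Y → ℝ) (hpY : ∀ y, 0 ≤ pY y) (hpY1 : ∑ y, pY y = 1)
    (pd : Y → ℝ) (hpd : ∀ y, pd y ∈ Set.Ioo (0 : ℝ) 1)
    -- conditional entropies H(X|Y) and H(X|S)
    (HXY HXS : ℝ) (hHXY : HXY = ∑ y, pY y * Hb (pd y))
    -- parity bias distribution Q with values q ω ∈ (0,1) and weights w
    (Ω : Type*) [Fintype Ω] (w : Ω → ℝ) (hw : ∀ ω, 0 ≤ w ω) (hw1 : ∑ ω, w ω = 1)
    (q : Ω → ℝ) (hq : ∀ ω, q ω ∈ Set.Ioo (0 : ℝ) 1)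
    -- E[H_b(Q)] = (1 - H(X|S))/(1 - R)
    (hEQ : ∑ ω, w ω * Hb (q ω) = (1 - HXS) / (1 - R))
    -- rate condition R < H(X|S) - H(X|Y) = I(X;Y) - I(X;S)
    (hrate : R < HXS - HXY)
    -- alternative conditional distributions P(X̃=1|Y=y) = pt y, P(Ṽ=1|Q=q ω) = vt ω
    (pt : Y → ℝ) (hpt : ∀ y, pt y ∈ Set.Icc (0 : ℝ) 1)
    (vt : Ω → ℝ) (hvt : ∀ ω, vt ω ∈ Set.Icc (0 : ℝ) 1)
    -- the constraint H(X̃|Y) + (1-R) H(Ṽ|Q) ≥ 1 - R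
    (hcons : 1 - R ≤ ∑ y, pY y * Hb (pt y) + (1 - R) * ∑ ω, w ω * Hb (vt ω)) :
    ∑ y, pY y * Hb2 (pd y) (pd y) + (1 - R) * ∑ ω, w ω * Hb2 (q ω) (q ω)
      < ∑ y, pY y * Hb2 (pt y) (pd y) + (1 - R) * ∑ ω, w ω * Hb2 (vt ω) (q ω) :=
  decoder_strict_inequality_general Y R hR1 pY hpY pd hpd HXY HXS hHXY Ω w hw q hq hEQ hrate pt hpt
    vt hvt hcons
end

section
/- Let l be a prime power, H uniformly random in GL_n(F_l), b uniform on F_l^n independent of H, k ≤ n, and fix m ∈ F_l^k. Let x be uniform on F_l^n independent of (H, b), and write x H^T ⊕ b = [m', v] with m' ∈ F_l^k, v ∈ F_l^{n-k}. Then [m', v] is uniformly distributed on F_l^n and independent of x. Moreover, conditioned on the set C(m) = {(x, v) : [m, v] = x H^T ⊕ b}, a fresh uniform x̃ with [m̃, ṽ] = x̃ H^T ⊕ b satisfies: if x̃ ∉ X(m) := {x : ∃v, (x,v) ∈ C(m)}, then ṽ is uniform on F_l^{n-k}. -/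
section helpers

variable {F : Type*} [Field F] {n k : ℕ}

private def Wemb (hk : k ≤ n) (u : Fin (n - k) → F) : Fin n → F :=
  fun i => if h : k ≤ (i : ℕ) then u ⟨(i : ℕ) - k, by omega⟩ else 0

private lemma Wemb_lt (hk : k ≤ n) (u : Fin (n - k) → F) (i : Fin n) (h : (i : ℕ) < k) :
    Wemb hk u i = 0 := by simp [Wemb, Nat.not_le.mpr h]

private lemma Wemb_hi (hk : k ≤ n) (u : Fin (n - k) → F) (j : Fin (n - k))
    (h : k + (j : ℕ) < n) : Wemb hk u ⟨k + (j : ℕ), h⟩ = u j := by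
  simp only [Wemb]
  rw [dif_pos (by omega)]
  congr 1
  exact Fin.ext (by simp)

private def shearMap (t : F) (i₀ : Fin n) (w : Fin n → F) :
    (Fin n → F) →ₗ[F] (Fin n → F) :=
  (t • (LinearMap.proj i₀ : (Fin n → F) →ₗ[F] F)).smulRight w

private lemma shearMap_apply (t : F) (i₀ : Fin n) (w : Fin n → F) (y : Fin n → F) :
    shearMap t i₀ w y = (t * y i₀) • w := by
  simp [shearMap, smul_eq_mul]

private def shear (t : F) (i₀ : Fin n) (w : Fin n → F) (hw : w i₀ = 0) :
    (Fin n → F) ≃ₗ[F] (Fin n → F) :=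
  LinearEquiv.ofLinear (LinearMap.id + shearMap t i₀ w) (LinearMap.id - shearMap t i₀ w)
    (by
      apply LinearMap.ext; intro y; funext j
      simp [shearMap_apply, hw])
    (by
      apply LinearMap.ext; intro y; funext j
      simp [shearMap_apply, hw])

private lemma shear_apply (t : F) (i₀ : Fin n) (w : Fin n → F) (hw : w i₀ = 0)
    (y : Fin n → F) : shear t i₀ w hw y = y + (t * y i₀) • w := by
  simp [shear, shearMap_apply, LinearEquiv.ofLinear_apply]

/-- The transformed pair `(e', b')` with `e' x + b' = (e x + b) + ψ(x) • w`. -/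
private def Phi (hk : k ≤ n) (m : Fin k → F) (i₀ : Fin k) (t : F) (u : Fin (n - k) → F)
    (eb : ((Fin n → F) ≃ₗ[F] (Fin n → F)) × (Fin n → F)) :
    ((Fin n → F) ≃ₗ[F] (Fin n → F)) × (Fin n → F) :=
  (eb.1.trans (shear t (Fin.castLE hk i₀) (Wemb hk u)
      (Wemb_lt hk u _ (by simpa using i₀.2))),
   eb.2 + (t * (eb.2 (Fin.castLE hk i₀) - m i₀)) • Wemb hk u)

private lemma Phi_apply (hk : k ≤ n) (m : Fin k → F) (i₀ : Fin k) (t : F)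
    (u : Fin (n - k) → F) (eb : ((Fin n → F) ≃ₗ[F] (Fin n → F)) × (Fin n → F))
    (x : Fin n → F) :
    (Phi hk m i₀ t u eb).1 x + (Phi hk m i₀ t u eb).2
      = (eb.1 x + eb.2)
        + (t * ((eb.1 x + eb.2) (Fin.castLE hk i₀) - m i₀)) • Wemb hk u := by
  funext j
  simp only [Phi, LinearEquiv.trans_apply, shear_apply, Pi.add_apply, Pi.smul_apply,
    smul_eq_mul]
  ring

open Classical in
private noncomputable def step (hk : k ≤ n) (m : Fin k → F) (xt : Fin n → F)
    (u : Fin (n - k) → F) (eb : ((Fin n → F) ≃ₗ[F] (Fin n → F)) × (Fin n → F)) :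
    ((Fin n → F) ≃ₗ[F] (Fin n → F)) × (Fin n → F) :=
  if h : ∃ i : Fin k, (eb.1 xt + eb.2) (Fin.castLE hk i) ≠ m i then
    Phi hk m h.choose ((eb.1 xt + eb.2) (Fin.castLE hk h.choose) - m h.choose)⁻¹ u eb
  else eb

private lemma step_pattern (hk : k ≤ n) (m : Fin k → F) (xt : Fin n → F)
    (u : Fin (n - k) → F) (eb : ((Fin n → F) ≃ₗ[F] (Fin n → F)) × (Fin n → F))
    (x : Fin n → F) (i : Fin k) :
    ((step hk m xt u eb).1 x + (step hk m xt u eb).2) (Fin.castLE hk i)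
      = (eb.1 x + eb.2) (Fin.castLE hk i) := by
  have hz : Wemb hk u (Fin.castLE hk i) = 0 :=
    Wemb_lt hk u _ (by simpa using i.isLt)
  unfold step
  split
  · rw [Phi_apply]
    simp [hz]
  · rfl

private lemma step_mem (hk : k ≤ n) (m : Fin k → F) (xt : Fin n → F)
    (u : Fin (n - k) → F) (eb : ((Fin n → F) ≃ₗ[F] (Fin n → F)) × (Fin n → F))
    (x : Fin n → F) (hx : ∀ i : Fin k, (eb.1 x + eb.2) (Fin.castLE hk i) = m i) :
    (step hk m xt u eb).1 x + (step hk m xt u eb).2 = eb.1 x + eb.2 := by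
  unfold step
  split
  · rw [Phi_apply, hx]
    simp
  · rfl

private lemma step_tail (hk : k ≤ n) (m : Fin k → F) (xt : Fin n → F)
    (u : Fin (n - k) → F) (eb : ((Fin n → F) ≃ₗ[F] (Fin n → F)) × (Fin n → F))
    (h : ∃ i : Fin k, (eb.1 xt + eb.2) (Fin.castLE hk i) ≠ m i)
    (j : Fin (n - k)) (hj : k + (j : ℕ) < n) :
    ((step hk m xt u eb).1 xt + (step hk m xt u eb).2) ⟨k + (j : ℕ), hj⟩
      = (eb.1 xt + eb.2) ⟨k + (j : ℕ), hj⟩ + u j := by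
  unfold step
  rw [dif_pos h, Phi_apply]
  have hc : (eb.1 xt + eb.2) (Fin.castLE hk h.choose) - m h.choose ≠ 0 :=
    sub_ne_zero.mpr h.choose_spec
  simp only [Pi.add_apply, Pi.smul_apply, smul_eq_mul, Wemb_hi hk u j hj]
  simp only [Pi.add_apply] at hc
  rw [inv_mul_cancel₀ hc, one_mul]

private lemma Phi_Phi (hk : k ≤ n) (m : Fin k → F) (i₀ : Fin k) (t : F)
    (u : Fin (n - k) → F) (eb : ((Fin n → F) ≃ₗ[F] (Fin n → F)) × (Fin n → F)) :
    Phi hk m i₀ t (-u) (Phi hk m i₀ t u eb) = eb := by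
  have hWneg : Wemb hk (-u) = -(Wemb hk u : Fin n → F) := by
    funext i
    by_cases h : k ≤ (i : ℕ)
    · simp [Wemb, dif_pos h]
    · simp [Wemb, dif_neg h]
  have hw0 : Wemb hk u (Fin.castLE hk i₀) = 0 :=
    Wemb_lt hk u _ (by simpa using i₀.2)
  have key : ∀ x : Fin n → F,
      (Phi hk m i₀ t (-u) (Phi hk m i₀ t u eb)).1 x
        + (Phi hk m i₀ t (-u) (Phi hk m i₀ t u eb)).2 = eb.1 x + eb.2 := by
    intro x
    rw [Phi_apply, Phi_apply]
    have hcoord : ((eb.1 x + eb.2)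
        + (t * ((eb.1 x + eb.2) (Fin.castLE hk i₀) - m i₀)) • Wemb hk u)
          (Fin.castLE hk i₀) = (eb.1 x + eb.2) (Fin.castLE hk i₀) := by
      simp [hw0]
    rw [hcoord, hWneg]
    funext j
    simp only [Pi.add_apply, Pi.smul_apply, Pi.neg_apply, smul_eq_mul]
    ring
  have hb : (Phi hk m i₀ t (-u) (Phi hk m i₀ t u eb)).2 = eb.2 := by
    have := key 0
    simpa using this
  refine Prod.ext ?_ hb
  apply LinearEquiv.toLinearMap_injective
  apply LinearMap.ext
  intro x
  have := key x
  rw [hb] at this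
  exact add_right_cancel this

private lemma step_step (hk : k ≤ n) (m : Fin k → F) (xt : Fin n → F)
    (u : Fin (n - k) → F) (eb : ((Fin n → F) ≃ₗ[F] (Fin n → F)) × (Fin n → F))
    (h : ∃ i : Fin k, (eb.1 xt + eb.2) (Fin.castLE hk i) ≠ m i) :
    step hk m xt (-u) (step hk m xt u eb) = eb := by
  set E := step hk m xt u eb with hE
  have hpat : ∀ i : Fin k, (E.1 xt + E.2) (Fin.castLE hk i)
      = (eb.1 xt + eb.2) (Fin.castLE hk i) := by
    intro i
    rw [hE]
    exact step_pattern hk m xt u eb xt i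
  have hstep : E = Phi hk m h.choose
      ((eb.1 xt + eb.2) (Fin.castLE hk h.choose) - m h.choose)⁻¹ u eb := by
    rw [hE]
    unfold step
    rw [dif_pos h]
  have hP : (fun i : Fin k => ((E.1 xt + E.2) (Fin.castLE hk i) ≠ m i))
      = (fun i : Fin k => ((eb.1 xt + eb.2) (Fin.castLE hk i) ≠ m i)) := by
    funext i; rw [hpat i]
  have hQ : (∃ i : Fin k, (E.1 xt + E.2) (Fin.castLE hk i) ≠ m i)
      = (∃ i : Fin k, (eb.1 xt + eb.2) (Fin.castLE hk i) ≠ m i) := by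
    rw [show (∃ i : Fin k, (E.1 xt + E.2) (Fin.castLE hk i) ≠ m i)
        = Exists (fun i : Fin k => ((E.1 xt + E.2) (Fin.castLE hk i) ≠ m i)) from rfl, hP]
  have h' : ∃ i : Fin k, (E.1 xt + E.2) (Fin.castLE hk i) ≠ m i := hQ.symm ▸ h
  unfold step
  rw [dif_pos h']
  rw [hpat]
  have hch : h'.choose = h.choose := by
    have key : ∀ (P Q : Fin k → Prop) (_ : P = Q) (hp : Exists P) (hq : Exists Q),
        hp.choose = hq.choose := by
      intro P Q hPQ hp hq
      subst hPQ
      cases Subsingleton.elim hp hq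
      rfl
    exact key _ _ hP h' h
  rw [hch, hstep]
  exact Phi_Phi hk m h.choose _ u eb

end helpers

/-- Let `F` be a finite field, `H` uniformly random invertible (as a linear
automorphism `e` of `F^n`, playing the role of `x ↦ x Hᵀ`), `b` uniform on `F^n`
independent of `e`, `k ≤ n`. Write `e x + b = [m', v]` with `m' ∈ F^k`, `v ∈ F^{n-k}`.
(1) For `x` uniform independent of `(e, b)`, the output `[m', v] = e x + b` is uniform on
`F^n` and independent of `x`: for every `x` and every target `z`, the number of pairs
`(e, b)` with `e x + b = z` is the same (namely the number of automorphisms `e`).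
(2) Fix `m ∈ F^k` and condition on the set `C(m) = {(x, v) : [m, v] = e x + b}` taking any
given value `C₀`; then for any `x̃ ∉ X(m) = {x : ∃ v, (x,v) ∈ C₀}`, the vector
`ṽ = π₂(e x̃ + b)` is uniform on `F^{n-k}`: all values of `ṽ` are equally likely. -/
theorem affine_map_conditional_uniformity
    (F : Type*) [Field F] [Fintype F] (n k : ℕ) (hk : k ≤ n) :
    (∀ x z : Fin n → F,
      Nat.card {eb : ((Fin n → F) ≃ₗ[F] (Fin n → F)) × (Fin n → F) //
          eb.1 x + eb.2 = z}
        = Nat.card ((Fin n → F) ≃ₗ[F] (Fin n → F))) ∧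
    (∀ m : Fin k → F, ∀ C₀ : Set ((Fin n → F) × (Fin (n - k) → F)),
      ∀ xt : Fin n → F, (∀ v : Fin (n - k) → F, (xt, v) ∉ C₀) →
      ∀ v₁ v₂ : Fin (n - k) → F,
        Nat.card {eb : ((Fin n → F) ≃ₗ[F] (Fin n → F)) × (Fin n → F) //
            ({xv : (Fin n → F) × (Fin (n - k) → F) |
                (∀ i : Fin k, (eb.1 xv.1 + eb.2) (Fin.castLE hk i) = m i) ∧
                (∀ j : Fin (n - k), (eb.1 xv.1 + eb.2) ⟨k + j.1, by omega⟩ = xv.2 j)}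
              = C₀) ∧
            (∀ j : Fin (n - k), (eb.1 xt + eb.2) ⟨k + j.1, by omega⟩ = v₁ j)}
          = Nat.card {eb : ((Fin n → F) ≃ₗ[F] (Fin n → F)) × (Fin n → F) //
            ({xv : (Fin n → F) × (Fin (n - k) → F) |
                (∀ i : Fin k, (eb.1 xv.1 + eb.2) (Fin.castLE hk i) = m i) ∧
                (∀ j : Fin (n - k), (eb.1 xv.1 + eb.2) ⟨k + j.1, by omega⟩ = xv.2 j)}
              = C₀) ∧
            (∀ j : Fin (n - k), (eb.1 xt + eb.2) ⟨k + j.1, by omega⟩ = v₂ j)}) := by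
  constructor
  · intro x z
    refine Nat.card_congr
      ⟨fun eb => eb.1.1, fun e => ⟨(e, z - e x), by rw [add_sub_cancel]⟩, ?_, fun e => rfl⟩
    rintro ⟨⟨e, b⟩, hb⟩
    have hzb : z - e x = b := by rw [← hb]; abel
    refine Subtype.ext ?_
    show ((e, z - e x) : ((Fin n → F) ≃ₗ[F] (Fin n → F)) × (Fin n → F)) = (e, b)
    rw [hzb]
  · intro m C₀ xt hxt v₁ v₂
    -- existence of a discrepancy index for any pair satisfying the conditioning
    have hex : ∀ eb : ((Fin n → F) ≃ₗ[F] (Fin n → F)) × (Fin n → F),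
        ({xv : (Fin n → F) × (Fin (n - k) → F) |
            (∀ i : Fin k, (eb.1 xv.1 + eb.2) (Fin.castLE hk i) = m i) ∧
            (∀ j : Fin (n - k), (eb.1 xv.1 + eb.2) ⟨k + j.1, by omega⟩ = xv.2 j)} = C₀) →
        ∃ i : Fin k, (eb.1 xt + eb.2) (Fin.castLE hk i) ≠ m i := by
      intro eb hC
      by_contra hno
      push_neg at hno
      refine hxt (fun j => (eb.1 xt + eb.2) ⟨k + j.1, by omega⟩) ?_
      rw [← hC]
      exact ⟨hno, fun j => rfl⟩
    -- the set-valued condition is preserved by `step`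
    have hset : ∀ (u : Fin (n - k) → F)
        (eb : ((Fin n → F) ≃ₗ[F] (Fin n → F)) × (Fin n → F)),
        {xv : (Fin n → F) × (Fin (n - k) → F) |
            (∀ i : Fin k, ((step hk m xt u eb).1 xv.1 + (step hk m xt u eb).2)
              (Fin.castLE hk i) = m i) ∧
            (∀ j : Fin (n - k), ((step hk m xt u eb).1 xv.1 + (step hk m xt u eb).2)
              ⟨k + j.1, by omega⟩ = xv.2 j)}
          = {xv : (Fin n → F) × (Fin (n - k) → F) |
            (∀ i : Fin k, (eb.1 xv.1 + eb.2) (Fin.castLE hk i) = m i) ∧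
            (∀ j : Fin (n - k), (eb.1 xv.1 + eb.2) ⟨k + j.1, by omega⟩ = xv.2 j)} := by
      intro u eb
      ext ⟨x, v⟩
      simp only [Set.mem_setOf_eq]
      constructor
      · rintro ⟨h1, h2⟩
        have h1' : ∀ i : Fin k, (eb.1 x + eb.2) (Fin.castLE hk i) = m i :=
          fun i => (step_pattern hk m xt u eb x i).symm.trans (h1 i)
        refine ⟨h1', fun j => ?_⟩
        rw [← step_mem hk m xt u eb x h1']
        exact h2 j
      · rintro ⟨h1, h2⟩
        refine ⟨fun i => (step_pattern hk m xt u eb x i).trans (h1 i), fun j => ?_⟩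
        rw [step_mem hk m xt u eb x h1]
        exact h2 j
    refine Nat.card_congr ⟨?_, ?_, ?_, ?_⟩
    · rintro ⟨eb, hC, hv⟩
      refine ⟨step hk m xt (v₂ - v₁) eb, ?_, ?_⟩
      · rw [hset (v₂ - v₁) eb]; exact hC
      · intro j
        rw [step_tail hk m xt (v₂ - v₁) eb (hex eb hC) j (by omega), hv j]
        simp
    · rintro ⟨eb, hC, hv⟩
      refine ⟨step hk m xt (v₁ - v₂) eb, ?_, ?_⟩
      · rw [hset (v₁ - v₂) eb]; exact hC
      · intro j
        rw [step_tail hk m xt (v₁ - v₂) eb (hex eb hC) j (by omega), hv j]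
        simp
    · rintro ⟨eb, hC, hv⟩
      refine Subtype.ext ?_
      show step hk m xt (v₁ - v₂) (step hk m xt (v₂ - v₁) eb) = eb
      rw [show v₁ - v₂ = -(v₂ - v₁) by abel]
      exact step_step hk m xt (v₂ - v₁) eb (hex eb hC)
    · rintro ⟨eb, hC, hv⟩
      refine Subtype.ext ?_
      show step hk m xt (v₂ - v₁) (step hk m xt (v₁ - v₂) eb) = eb
      rw [show v₂ - v₁ = -(v₁ - v₂) by abel]
      exact step_step hk m xt (v₁ - v₂) eb (hex eb hC)
end
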